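/- arXiv:2408.05561 — 2 statements merged into one kernel-verified Lean document; each statement's English description precedes it below -/
import Mathlib

section
/- Let K be a field, R = K[x_1,…,x_n], I ⊆ R a monomial ideal, ℓ a positive integer, v a square-free monomial of R with v ∈ I^ℓ, and 𝔭 a prime monomial ideal of R such that, for some positive integer s, 𝔭\x_i ∉ Ass(R/(I\x_i)^s) for every variable x_i dividing v. If 𝔭 ∈ Ass(R/I^s), then s > ℓ. -/
open MvPolynomial

/-- Deletion of the variable `x i` from a monomial ideal: set `x i = 0` in every generator. -/
noncomputable def deleteVar {K : Type*} [Field K] {n : ℕ} (i : Fin n)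
    (I : Ideal (MvPolynomial (Fin n) K)) : Ideal (MvPolynomial (Fin n) K) :=
  I.map (aeval fun j => if j = i then (0 : MvPolynomial (Fin n) K) else X j).toRingHom

/-!
Suppose `s ≤ ℓ`, so that `v = ∏_{i ∈ T} x_i ∈ J := I ^ s`. A power of a monomial ideal is monomial,
and a prime `𝔭` generated by variables that is associated to `R ⧸ J` is the colon `J : w` by a
single monomial `w ∉ J`. As `v ∈ J`, `v` does not divide `w`: some `x_i ∣ v` does not occur in `w`.
Setting `x_i = 0` commutes with the colon by a monomial free of `x_i`, so `𝔭 \ x_i = (J \ x_i) : w`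
with `J \ x_i = (I \ x_i) ^ s`; being again generated by variables, `𝔭 \ x_i` is prime, hence an
associated prime of `R ⧸ (I \ x_i) ^ s`, which is excluded.
-/

theorem Ideal.bot_colon_quotient_mk {R : Type*} [CommRing R] (J : Ideal R) (f : R) :
    (⊥ : Submodule R (R ⧸ J)).colon {Ideal.Quotient.mk J f} = J.colon {f} := by
  ext r
  simp [Submodule.mem_colon_singleton, Algebra.smul_def, ← map_mul, Ideal.Quotient.eq_zero_iff_mem]

theorem Ideal.mem_colon_singleton_comm {R : Type*} [CommRing R] {J : Ideal R} {a b : R} :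
    a ∈ J.colon {b} ↔ b ∈ J.colon {a} := by
  simp only [Submodule.mem_colon_singleton, smul_eq_mul, mul_comm]

theorem isAssociatedPrime_quotient_iff {R : Type*} [CommRing R] [IsNoetherianRing R]
    {p J : Ideal R} : IsAssociatedPrime p (R ⧸ J) ↔ p.IsPrime ∧ ∃ f, p = J.colon {f} := by
  simp only [isAssociatedPrime_iff, Ideal.Quotient.mk_surjective.exists,
    Ideal.bot_colon_quotient_mk]

namespace MvPolynomial

open Pointwise

variable {σ R : Type*}

theorem aeval_ite_X_monomial [CommSemiring R] [DecidableEq σ]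
    (i : σ) (d : σ →₀ ℕ) (c : R) :
    aeval (fun j => if j = i then 0 else X j) (monomial d c) =
      if d i = 0 then monomial d c else 0 := by
  rw [aeval_monomial, algebraMap_eq, Finsupp.prod]
  split_ifs with hd
  · rw [monomial_eq, Finsupp.prod]
    refine congrArg _ (Finset.prod_congr rfl fun j hj => ?_)
    rw [if_neg]
    rintro rfl
    exact Finsupp.mem_support_iff.mp hj hd
  · rw [Finset.prod_eq_zero (Finsupp.mem_support_iff.mpr hd) (by simp [hd]), mul_zero]

section CommRing

variable [CommRing R]

variable (R) in
noncomputable abbrev monomialIdeal (S : Set (σ →₀ ℕ)) : Ideal (MvPolynomial σ R) :=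
  Ideal.span ((fun d => monomial d (1 : R)) '' S)

theorem span_X_image_eq_monomialIdeal (A : Set σ) :
    Ideal.span (X '' A : Set (MvPolynomial σ R)) =
      monomialIdeal R ((fun j => Finsupp.single j 1) '' A) := by
  rw [monomialIdeal, Set.image_image]
  rfl

theorem monomialIdeal_mul (S S' : Set (σ →₀ ℕ)) :
    monomialIdeal R S * monomialIdeal R S' = monomialIdeal R (S + S') := by
  rw [Ideal.span_mul_span', ← Set.image2_mul, Set.image2_image_left, Set.image2_image_right,
    ← Set.image2_add, monomialIdeal, Set.image_image2]
  simp only [monomial_mul, one_mul]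

theorem exists_monomialIdeal_pow_eq (S : Set (σ →₀ ℕ)) (s : ℕ) :
    ∃ S', monomialIdeal R S ^ s = monomialIdeal R S' := by
  induction s with
  | zero => exact ⟨{0}, by simp [monomialIdeal]⟩
  | succ s ih =>
    obtain ⟨S', hS'⟩ := ih
    exact ⟨S' + S, by rw [pow_succ, hS', monomialIdeal_mul]⟩

theorem support_mul_monomial_one (f : MvPolynomial σ R) (w : σ →₀ ℕ) :
    (f * monomial w 1).support = f.support.map (addRightEmbedding w) :=
  AddMonoidAlgebra.support_coeff_mul_single f 1 (by simp) w

theorem monomialIdeal_colon_monomial (S : Set (σ →₀ ℕ)) (w : σ →₀ ℕ) :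
    (monomialIdeal R S).colon {monomial w (1 : R)} = monomialIdeal R ((· - w) '' S) := by
  ext f
  simp only [Submodule.mem_colon_singleton, smul_eq_mul, mem_ideal_span_monomial_image,
    support_mul_monomial_one, Finset.mem_map, addRightEmbedding_apply, Set.exists_mem_image,
    tsub_le_iff_right, forall_exists_index, and_imp, forall_apply_eq_imp_iff₂]

open scoped Classical in
theorem inf_colon_monomial_le_colon (J : Ideal (MvPolynomial σ R)) (f : MvPolynomial σ R) :
    {m ∈ f.support | monomial m 1 ∉ J}.inf (fun m => J.colon {monomial m (1 : R)})
      ≤ J.colon {f} := by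
  intro g hg
  rw [Submodule.mem_colon_singleton, smul_eq_mul, f.as_sum, Finset.mul_sum]
  refine Ideal.sum_mem _ fun m hm => ?_
  rw [← mul_one (coeff m f), ← C_mul_monomial, mul_left_comm]
  refine Ideal.mul_mem_left _ _ ?_
  by_cases hmJ : monomial m 1 ∈ J
  · exact J.mul_mem_left g hmJ
  · simpa using Finset.inf_le (f := fun m => J.colon {monomial m (1 : R)})
      (Finset.mem_filter.mpr ⟨hm, hmJ⟩) hg

theorem prod_X_dvd_monomial_one {T : Finset σ} {w : σ →₀ ℕ} (hw : ∀ i ∈ T, w i ≠ 0) :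
    ∏ i ∈ T, X i ∣ monomial w (1 : R) := by
  have := prod_X_pow (R := R) (fun _ => 1) T
  simp only [pow_one] at this
  rw [this, monomial_dvd_monomial]
  refine ⟨Or.inr fun i => ?_, dvd_rfl⟩
  by_cases hi : i ∈ T
  · exact (Finsupp.indicator_of_mem hi _).trans_le (Nat.one_le_iff_ne_zero.mpr (hw i hi))
  · exact (Finsupp.indicator_of_notMem hi _).trans_le (Nat.zero_le _)

theorem isPrime_span_X_image [IsDomain R] (A : Set σ) :
    (Ideal.span (X '' A : Set (MvPolynomial σ R))).IsPrime := by
  classical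
  -- Killing the variables of `A` is the identity modulo `p`, so `p` is the kernel of that map.
  set p := Ideal.span (X '' A : Set (MvPolynomial σ R))
  let ψ : MvPolynomial σ R →ₐ[R] MvPolynomial σ R := aeval fun j => if j ∈ A then 0 else X j
  have hψ : ∀ f, Ideal.Quotient.mk p (ψ f) = Ideal.Quotient.mk p f := by
    intro f
    change (Ideal.Quotient.mkₐ R p).comp ψ f = Ideal.Quotient.mkₐ R p f
    congr 1
    refine algHom_ext fun j => ?_
    by_cases hj : j ∈ A
    · simp only [ψ, AlgHom.comp_apply, aeval_X, if_pos hj, map_zero]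
      exact (Ideal.Quotient.eq_zero_iff_mem.mpr
        (Ideal.subset_span (Set.mem_image_of_mem X hj))).symm
    · simp [ψ, hj]
  suffices p = RingHom.ker ψ from this ▸ RingHom.ker_isPrime _
  refine le_antisymm (Ideal.span_le.mpr ?_) fun f hf => ?_
  · rintro _ ⟨j, hj, rfl⟩
    simp [ψ, hj]
  · rw [← Ideal.Quotient.eq_zero_iff_mem, ← hψ, (RingHom.mem_ker).mp hf, map_zero]

variable [Nontrivial R]

theorem monomial_one_mem_monomialIdeal_iff {S : Set (σ →₀ ℕ)} {m : σ →₀ ℕ} :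
    monomial m (1 : R) ∈ monomialIdeal R S ↔ ∃ d ∈ S, d ≤ m := by
  classical
  simp [mem_ideal_span_monomial_image, support_monomial]

theorem monomial_one_mem_of_mem_support {S : Set (σ →₀ ℕ)} {f : MvPolynomial σ R}
    (hf : f ∈ monomialIdeal R S) {m : σ →₀ ℕ} (hm : m ∈ f.support) :
    monomial m (1 : R) ∈ monomialIdeal R S :=
  monomial_one_mem_monomialIdeal_iff.mpr (mem_ideal_span_monomial_image.mp hf m hm)

theorem exists_monomial_colon_eq {S : Set (σ →₀ ℕ)} {A : Set σ}
    {f : MvPolynomial σ R} (hA : (Ideal.span (X '' A : Set (MvPolynomial σ R))).IsPrime)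
    (hf : Ideal.span (X '' A) = (monomialIdeal R S).colon {f}) :
    ∃ w, monomial w 1 ∉ monomialIdeal R S ∧
      Ideal.span (X '' A) = (monomialIdeal R S).colon {monomial w (1 : R)} := by
  classical
  -- `J : x_j` is again a monomial ideal, so along with `f` it contains every monomial of `f`.
  have le_colon : ∀ m ∈ f.support,
      Ideal.span (X '' A) ≤ (monomialIdeal R S).colon {monomial m (1 : R)} := by
    intro m hm
    rw [Ideal.span_le]
    rintro _ ⟨j, hj, rfl⟩
    have hXf : f ∈ (monomialIdeal R S).colon {X j} :=
      Ideal.mem_colon_singleton_comm.mp (hf ▸ Ideal.subset_span ⟨j, hj, rfl⟩)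
    rw [X, monomialIdeal_colon_monomial] at hXf
    rw [SetLike.mem_coe, Ideal.mem_colon_singleton_comm, X, monomialIdeal_colon_monomial]
    exact monomial_one_mem_of_mem_support hXf hm
  obtain ⟨m, hm, hle⟩ := hA.prod_le.mp <|
    Ideal.prod_le_inf.trans ((inf_colon_monomial_le_colon _ f).trans hf.ge)
  obtain ⟨hm, hmJ⟩ := Finset.mem_filter.mp hm
  exact ⟨m, hmJ, (le_colon m hm).antisymm hle⟩

end CommRing

end MvPolynomial

section DeleteVar

variable {K : Type*} [Field K] {n : ℕ} (i : Fin n)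

theorem deleteVar_pow (I : Ideal (MvPolynomial (Fin n) K)) (s : ℕ) :
    deleteVar i (I ^ s) = deleteVar i I ^ s :=
  Ideal.map_pow _ _ _

theorem deleteVar_monomialIdeal (S : Set (Fin n →₀ ℕ)) :
    deleteVar i (monomialIdeal K S) = monomialIdeal K {d ∈ S | d i = 0} := by
  rw [deleteVar, Ideal.map_span]
  refine le_antisymm (Ideal.span_le.mpr ?_) (Ideal.span_mono ?_)
  · rintro _ ⟨_, ⟨d, hd, rfl⟩, rfl⟩
    rw [AlgHom.toRingHom_eq_coe, RingHom.coe_coe, aeval_ite_X_monomial]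
    split_ifs with hdi
    · exact Ideal.subset_span ⟨d, ⟨hd, hdi⟩, rfl⟩
    · exact zero_mem _
  · rintro _ ⟨d, ⟨hd, hdi⟩, rfl⟩
    refine ⟨_, ⟨d, hd, rfl⟩, ?_⟩
    rw [AlgHom.toRingHom_eq_coe, RingHom.coe_coe, aeval_ite_X_monomial, if_pos hdi]

theorem deleteVar_span_X_image (A : Set (Fin n)) :
    deleteVar i (Ideal.span (X '' A) : Ideal (MvPolynomial (Fin n) K)) =
      Ideal.span (X '' (A \ {i})) := by
  rw [span_X_image_eq_monomialIdeal, deleteVar_monomialIdeal, span_X_image_eq_monomialIdeal]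
  congr 2
  ext d
  simp only [Set.mem_image, Set.mem_sdiff, Set.mem_singleton_iff]
  constructor
  · rintro ⟨⟨j, hj, rfl⟩, hji⟩
    exact ⟨j, ⟨hj, fun h => by simp [h] at hji⟩, rfl⟩
  · rintro ⟨j, ⟨hj, hji⟩, rfl⟩
    exact ⟨⟨j, hj, rfl⟩, by simp [hji]⟩

theorem deleteVar_colon_monomial (S : Set (Fin n →₀ ℕ)) {w : Fin n →₀ ℕ} (hw : w i = 0) :
    deleteVar i ((monomialIdeal K S).colon {monomial w 1}) =
      (deleteVar i (monomialIdeal K S)).colon {monomial w 1} := by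
  rw [monomialIdeal_colon_monomial, deleteVar_monomialIdeal, deleteVar_monomialIdeal,
    monomialIdeal_colon_monomial]
  congr 2
  ext e
  simp only [Set.mem_ofPred_eq, Set.mem_image]
  constructor
  · rintro ⟨⟨d, hd, rfl⟩, hdi⟩
    exact ⟨d, ⟨hd, by simpa [hw] using hdi⟩, rfl⟩
  · rintro ⟨d, ⟨hd, hdi⟩, rfl⟩
    exact ⟨⟨d, hd, rfl⟩, by simp [hw, hdi]⟩

end DeleteVar

theorem stmt_1_general {K : Type*} [Field K] {n : ℕ}
    (I : Ideal (MvPolynomial (Fin n) K))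
    (hI : ∃ S : Set (Fin n →₀ ℕ),
      I = Ideal.span ((fun d => (monomial d (1 : K))) '' S))
    (ℓ : ℕ)
    (T : Finset (Fin n)) (hv : (∏ i ∈ T, X i) ∈ I ^ ℓ)
    (A : Set (Fin n)) (p : Ideal (MvPolynomial (Fin n) K))
    (hpA : p = Ideal.span (X '' A))
    (s : ℕ)
    (hdel : ∀ i ∈ T,
      deleteVar i p ∉
        associatedPrimes (MvPolynomial (Fin n) K)
          ((MvPolynomial (Fin n) K) ⧸ (deleteVar i I) ^ s))
    (hass : p ∈ associatedPrimes (MvPolynomial (Fin n) K) ((MvPolynomial (Fin n) K) ⧸ I ^ s)) :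
    ℓ < s := by
  obtain ⟨S, rfl⟩ := hI
  obtain ⟨S', hS'⟩ := exists_monomialIdeal_pow_eq (R := K) S s
  subst hpA
  by_contra! hsℓ
  have hvS' : ∏ i ∈ T, X i ∈ monomialIdeal K S' := hS' ▸ Ideal.pow_le_pow_right hsℓ hv
  rw [AssociatedPrimes.mem_iff, hS', isAssociatedPrime_quotient_iff] at hass
  obtain ⟨hprime, f, hf⟩ := hass
  obtain ⟨w, hwS', hw⟩ := exists_monomial_colon_eq hprime hf
  obtain ⟨i, hiT, hwi⟩ : ∃ i ∈ T, w i = 0 := by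
    by_contra! h
    exact hwS' (Ideal.mem_of_dvd _ (prod_X_dvd_monomial_one h) hvS')
  have hdel_colon : deleteVar i (Ideal.span (X '' A)) =
      (deleteVar i (monomialIdeal K S')).colon {monomial w 1} := by
    rw [hw, deleteVar_colon_monomial i S' hwi]
  refine hdel i hiT ?_
  rw [AssociatedPrimes.mem_iff, ← deleteVar_pow, hS', isAssociatedPrime_quotient_iff]
  exact ⟨deleteVar_span_X_image (K := K) i A ▸ isPrime_span_X_image _, monomial w 1, hdel_colon⟩

theorem stmt_1 {K : Type*} [Field K] {n : ℕ}
    (I : Ideal (MvPolynomial (Fin n) K))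
    (hI : ∃ S : Set (Fin n →₀ ℕ),
      I = Ideal.span ((fun d => (monomial d (1 : K))) '' S))
    (ℓ : ℕ) (hℓ : 1 ≤ ℓ)
    (T : Finset (Fin n)) (hv : (∏ i ∈ T, X i) ∈ I ^ ℓ)
    (A : Set (Fin n)) (p : Ideal (MvPolynomial (Fin n) K))
    (hpA : p = Ideal.span (X '' A)) (hp : p.IsPrime)
    (s : ℕ) (hs : 1 ≤ s)
    (hdel : ∀ i ∈ T,
      deleteVar i p ∉
        associatedPrimes (MvPolynomial (Fin n) K)
          ((MvPolynomial (Fin n) K) ⧸ (deleteVar i I) ^ s))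
    (hass : p ∈ associatedPrimes (MvPolynomial (Fin n) K) ((MvPolynomial (Fin n) K) ⧸ I ^ s)) :
    ℓ < s :=
  stmt_1_general I hI ℓ T hv A p hpA s hdel hass
end

section
/- Let G be a finite connected simple graph and let H = C(G) be the cone over G, obtained by adding a new vertex w to G and joining w to every vertex of G. Let R_G = K[x_v : v ∈ V(G)] and R_H = K[x_v : v ∈ V(H)] be polynomial rings over a field K, and let I(G) ⊆ R_G and I(H) ⊆ R_H be the edge ideals of G and H. If the prime ideal (x_v : v ∈ V(G)) belongs to Ass(R_G/I(G)^t) for some integer t ≥ 2, then the prime ideal (x_v : v ∈ V(H)) belongs to Ass(R_H/I(H)^t). -/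
/-!
Write `m` for the ideal of the variables and `w` for the apex, so that
`I(C(G)) = I(G) + w·m`. Let `f` witness `m = (I(G)^t : f)`. Multiplying by a variable lands `f`
in `I(G)^t ⊆ m^(2t)`, so `f ∈ m^t` and hence `w^t f ∈ (w·m)^t ⊆ I(C(G))^t`, whereas
`f ∉ I(C(G))^t` because setting `w = 0` retracts `I(C(G))` onto `I(G)`. For the least `n` with
`w^n f ∈ I(C(G))^t`, the element `g = w^(n-1) f` is not in `I(C(G))^t`, but `w g` and every
`x_v g` are, so the colon ideal of `g` is the maximal ideal of all variables of the cone.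
-/

open MvPolynomial

/-- The cone over a simple graph `G`: add a new vertex (`none`) joined to every vertex of `G`. -/
def cone {V : Type*} (G : SimpleGraph V) : SimpleGraph (Option V) where
  Adj a b := a ≠ b ∧ ∀ u v : V, a = some u → b = some v → G.Adj u v
  symm := by
    constructor
    rintro a b ⟨hne, h⟩
    exact ⟨hne.symm, fun u v hb ha => (h v u ha hb).symm⟩
  loopless := by
    constructor
    rintro a ⟨hne, -⟩
    exact hne rfl

/-- The edge ideal `I(G) = (x_u x_v : {u,v} ∈ E(G))` of a simple graph. -/
noncomputable def edgeIdeal {V : Type*} (K : Type*) [Field K] (G : SimpleGraph V) :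
    Ideal (MvPolynomial V K) :=
  Ideal.span {f : MvPolynomial V K | ∃ u v : V, G.Adj u v ∧ f = X u * X v}

section Quotient
variable {R : Type*} [CommRing R] {J : Ideal R}

lemma Ideal.Quotient.mem_colon_bot_mk_iff {r f : R} :
    r ∈ (⊥ : Submodule R (R ⧸ J)).colon {Ideal.Quotient.mk J f} ↔ r * f ∈ J := by
  rw [Submodule.mem_colon_singleton, Submodule.mem_bot, Algebra.smul_def,
    Ideal.Quotient.algebraMap_eq, ← map_mul, Ideal.Quotient.eq_zero_iff_mem]

lemma Ideal.span_mem_associatedPrimes_quotient {S : Set R} {g : R}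
    (hS : (Ideal.span S).IsMaximal) (hg : g ∉ J) (hSg : ∀ r ∈ S, r * g ∈ J) :
    Ideal.span S ∈ associatedPrimes R (R ⧸ J) := by
  have hcolon : Ideal.span S = (⊥ : Submodule R (R ⧸ J)).colon {Ideal.Quotient.mk J g} := by
    refine hS.eq_of_le (fun h1 => hg ?_) (Ideal.span_le.mpr fun r hr => ?_)
    · rw [← one_mul g]
      exact Ideal.Quotient.mem_colon_bot_mk_iff.mp ((Ideal.eq_top_iff_one _).mp h1)
    · exact Ideal.Quotient.mem_colon_bot_mk_iff.mpr (hSg r hr)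
  exact ⟨hS.isPrime, Ideal.Quotient.mk J g, by rw [← hcolon, hS.isPrime.radical]⟩

end Quotient

namespace MvPolynomial
variable {σ R : Type*} [CommRing R]

lemma idealOfVars_eq_ker_constantCoeff :
    idealOfVars σ R = RingHom.ker (constantCoeff : MvPolynomial σ R →+* R) := by
  ext p
  rw [← pow_one (idealOfVars σ R), mem_pow_idealOfVars_iff', RingHom.mem_ker, constantCoeff_eq]
  refine ⟨fun h => h 0 (by simp), fun h x hx => ?_⟩
  rwa [(Finsupp.degree_eq_zero_iff x).mp (Nat.lt_one_iff.mp hx)]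

lemma idealOfVars_isMaximal {K : Type*} [Field K] : (idealOfVars σ K).IsMaximal := by
  rw [idealOfVars_eq_ker_constantCoeff]
  exact RingHom.ker_isMaximal_of_surjective _ fun a => ⟨C a, constantCoeff_C _ _⟩

lemma mem_pow_idealOfVars_of_X_mul_mem {v : σ} {p : MvPolynomial σ R} {n : ℕ}
    (h : X v * p ∈ idealOfVars σ R ^ (n + 1)) : p ∈ idealOfVars σ R ^ n := by
  classical
  rw [mem_pow_idealOfVars_iff'] at h ⊢
  intro x hx
  rw [← coeff_X_mul]
  exact h _ (by simp only [map_add, Finsupp.degree_single]; omega)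

end MvPolynomial

section EdgeIdeal
variable {V K : Type*} [Field K] (G : SimpleGraph V)

lemma edgeIdeal_le_pow_idealOfVars : edgeIdeal K G ≤ idealOfVars V K ^ 2 := by
  refine Ideal.span_le.mpr ?_
  rintro _ ⟨u, v, -, rfl⟩
  rw [pow_two]
  exact Ideal.mul_mem_mul (Ideal.subset_span ⟨u, rfl⟩) (Ideal.subset_span ⟨v, rfl⟩)

lemma cone_adj_some_some {u v : V} (h : G.Adj u v) : (cone G).Adj (some u) (some v) :=
  ⟨by simpa using h.ne, fun _ _ hu hv =>
    Option.some_injective _ hu ▸ Option.some_injective _ hv ▸ h⟩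

lemma cone_adj_some_none (v : V) : (cone G).Adj (some v) none :=
  ⟨Option.some_ne_none v, fun _ _ _ h => (Option.some_ne_none _ h.symm).elim⟩

lemma map_rename_edgeIdeal_le :
    (edgeIdeal K G).map (rename some) ≤ edgeIdeal K (cone G) := by
  rw [edgeIdeal, Ideal.map_span, Ideal.span_le]
  rintro _ ⟨_, ⟨u, v, huv, rfl⟩, rfl⟩
  rw [map_mul, rename_X, rename_X]
  exact Ideal.subset_span ⟨some u, some v, cone_adj_some_some G huv, rfl⟩

lemma killCompl_X_none :
    killCompl (Option.some_injective V) (X none : MvPolynomial (Option V) K) = 0 := by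
  simp [killCompl]

lemma killCompl_X_some (v : V) :
    killCompl (Option.some_injective V) (X (some v) : MvPolynomial (Option V) K) = X v := by
  rw [← rename_X, killCompl_rename_app]

lemma map_killCompl_edgeIdeal_cone_le :
    (edgeIdeal K (cone G)).map (killCompl (Option.some_injective V)) ≤ edgeIdeal K G := by
  rw [edgeIdeal, Ideal.map_span, Ideal.span_le]
  rintro _ ⟨_, ⟨a, b, hab, rfl⟩, rfl⟩
  match a, b with
  | some u, some v =>
    rw [map_mul, killCompl_X_some, killCompl_X_some]
    exact Ideal.subset_span ⟨u, v, hab.2 u v rfl rfl, rfl⟩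
  | none, _ => simp [killCompl_X_none]
  | _, none => simp [killCompl_X_none]

lemma rename_mem_pow_edgeIdeal_cone_iff {p : MvPolynomial V K} {t : ℕ} :
    rename some p ∈ edgeIdeal K (cone G) ^ t ↔ p ∈ edgeIdeal K G ^ t := by
  constructor
  · intro hp
    have := Ideal.mem_map_of_mem (killCompl (Option.some_injective V)) hp
    rw [Ideal.map_pow, killCompl_rename_app] at this
    exact Ideal.pow_right_mono (map_killCompl_edgeIdeal_cone_le G) t this
  · intro hp
    have := Ideal.mem_map_of_mem (rename some) hp
    rw [Ideal.map_pow] at this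
    exact Ideal.pow_right_mono (map_rename_edgeIdeal_le G) t this

lemma X_none_pow_mul_rename_mem_pow_edgeIdeal_cone {p : MvPolynomial V K} {n : ℕ}
    (hp : p ∈ idealOfVars V K ^ n) :
    X none ^ n * rename some p ∈ edgeIdeal K (cone G) ^ n := by
  have hspan : Ideal.span {X none} * (idealOfVars V K).map (rename some) ≤
      edgeIdeal K (cone G) := by
    rw [Ideal.map_span, Ideal.span_mul_span, Ideal.span_le]
    rintro _ ⟨_, rfl, _, ⟨_, ⟨v, rfl⟩, rfl⟩, rfl⟩
    rw [rename_X]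
    exact Ideal.subset_span ⟨none, some v, (cone_adj_some_none G v).symm, rfl⟩
  have hmem : X none ^ n * rename some p ∈
      Ideal.span {X none} ^ n * ((idealOfVars V K).map (rename some)) ^ n := by
    rw [← Ideal.map_pow]
    exact Ideal.mul_mem_mul (Ideal.pow_mem_pow (Ideal.mem_span_singleton_self _) n)
      (Ideal.mem_map_of_mem _ hp)
  rw [← mul_pow] at hmem
  exact Ideal.pow_right_mono hspan n hmem

end EdgeIdeal

theorem stmt_9 {V K : Type*} [Fintype V] [Field K]
    (G : SimpleGraph V) (hG : G.Connected)
    (t : ℕ) (ht : 2 ≤ t)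
    (h : Ideal.span (Set.range (X : V → MvPolynomial V K)) ∈
      associatedPrimes (MvPolynomial V K)
        ((MvPolynomial V K) ⧸ (edgeIdeal K G) ^ t)) :
    Ideal.span (Set.range (X : Option V → MvPolynomial (Option V) K)) ∈
      associatedPrimes (MvPolynomial (Option V) K)
        ((MvPolynomial (Option V) K) ⧸ (edgeIdeal K (cone G)) ^ t) := by
  classical
  obtain ⟨-, x, hx⟩ := isAssociatedPrime_iff.mp h
  obtain ⟨f, rfl⟩ := Ideal.Quotient.mk_surjective x
  have hXf (v : V) : X v * f ∈ edgeIdeal K G ^ t :=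
    Ideal.Quotient.mem_colon_bot_mk_iff.mp (hx ▸ Ideal.subset_span ⟨v, rfl⟩)
  have hf : f ∉ edgeIdeal K G ^ t := fun hf => idealOfVars_isMaximal.ne_top <|
    (Ideal.eq_top_iff_one _).mpr (hx ▸ Ideal.Quotient.mem_colon_bot_mk_iff.mpr (by rwa [one_mul]))
  obtain ⟨v₀⟩ := hG.nonempty
  have hfm : f ∈ idealOfVars V K ^ t := by
    have hXv₀ : X v₀ * f ∈ idealOfVars V K ^ (2 * t) := by
      rw [pow_mul]
      exact Ideal.pow_right_mono (edgeIdeal_le_pow_idealOfVars G) t (hXf v₀)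
    exact mem_pow_idealOfVars_of_X_mul_mem (Ideal.pow_le_pow_right (by omega) hXv₀)
  have hex : ∃ n, X none ^ n * rename some f ∈ edgeIdeal K (cone G) ^ t :=
    ⟨t, X_none_pow_mul_rename_mem_pow_edgeIdeal_cone G hfm⟩
  obtain ⟨s, hs⟩ : ∃ s, Nat.find hex = s + 1 := Nat.exists_eq_succ_of_ne_zero fun h0 =>
    hf ((rename_mem_pow_edgeIdeal_cone_iff G).mp (by simpa [h0] using Nat.find_spec hex))
  refine Ideal.span_mem_associatedPrimes_quotient idealOfVars_isMaximal
    (Nat.find_min hex (by omega : s < Nat.find hex)) ?_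
  rintro _ ⟨_ | v, rfl⟩
  · rw [← mul_assoc, ← pow_succ', ← hs]
    exact Nat.find_spec hex
  · rw [mul_left_comm, ← rename_X, ← map_mul]
    exact Ideal.mul_mem_left _ _ ((rename_mem_pow_edgeIdeal_cone_iff G).mpr (hXf v))
end
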